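/- arXiv:math/0601226 — 3 statements merged into one kernel-verified Lean document; each statement's English description precedes it below -/
import Mathlib

section
/- Let X be a metric space of finite asymptotic dimension with the Higson property (i.e. there is an integer N ≥ 0 such that the asymptotic dimension of X with the Higson property is at most N). Then for every integer n ≥ 0 the following are equivalent: (a) S^n is a large scale Lipschitz extensor of X; (b) the asymptotic dimension of X with the Higson property is at most n. -/
/-- A metric space `E` is a large scale Lipschitz extensor of `X`: there are `C, M > 0` such
that every `λ`-Lipschitz map on a nonempty subset of `X` with `0 < λ < M` extends to a
`(C·λ)`-Lipschitz map on `X`. -/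
def LargeScaleLipschitzExtensorOf (X E : Type*) [MetricSpace X] [MetricSpace E] : Prop :=
  ∃ C : ℝ, 0 < C ∧ ∃ M : ℝ, 0 < M ∧ ∀ A : Set X, A.Nonempty →
    ∀ lam : ℝ, 0 < lam → lam < M →
      ∀ f : A → E, (∀ a b : A, dist (f a) (f b) ≤ lam * dist (a : X) (b : X)) →
        ∃ g : X → E, (∀ a : A, g a = f a) ∧
          ∀ x y : X, dist (g x) (g y) ≤ C * lam * dist x y

/-- A metric space `E` is a small scale Lipschitz extensor of `X`: there are `C, M > 0` such
that every `λ`-Lipschitz map on a nonempty subset of `X` with `λ > M` extends to a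
`(C·λ)`-Lipschitz map on `X`. -/
def SmallScaleLipschitzExtensorOf (X E : Type*) [MetricSpace X] [MetricSpace E] : Prop :=
  ∃ C : ℝ, 0 < C ∧ ∃ M : ℝ, 0 < M ∧ ∀ A : Set X, A.Nonempty →
    ∀ lam : ℝ, M < lam →
      ∀ f : A → E, (∀ a b : A, dist (f a) (f b) ≤ lam * dist (a : X) (b : X)) →
        ∃ g : X → E, (∀ a : A, g a = f a) ∧
          ∀ x y : X, dist (g x) (g y) ≤ C * lam * dist x y
/-- The asymptotic dimension of `X` with the Higson property is at most `n`: there exist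
`C > 0` and `M > 0` such that for every `r > M` there is a cover of `X` splitting into `n+1`
`r`-disjoint families with all members of diameter at most `C·r`. -/
def HigsonAsdimLE (X : Type*) [MetricSpace X] (n : ℕ) : Prop :=
  ∃ C : ℝ, 0 < C ∧ ∃ M : ℝ, 0 < M ∧ ∀ r : ℝ, M < r →
    ∃ U : Fin (n + 1) → Set (Set X),
      (∀ x : X, ∃ i, ∃ V ∈ U i, x ∈ V) ∧
      (∀ i, ∀ V ∈ U i, ∀ W ∈ U i, V ≠ W → ∀ x ∈ V, ∀ y ∈ W, r < dist x y) ∧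
      (∀ i, ∀ V ∈ U i, ∀ x ∈ V, ∀ y ∈ V, dist x y ≤ C * r)

/-!
Being a large scale Lipschitz extensor passes to Lipschitz retracts, and radial projection is a
bi-Lipschitz bijection between the Euclidean sphere `Sⁿ` and the boundary `∂[-1,1]ⁿ⁺¹` of the
cube, the unit sphere of the sup norm on `Fin (n + 1) → ℝ`; so we may work with the cube.

If the Higson dimension is at most `n`, extend a `λ`-Lipschitz map `f : A → ∂[-1,1]ⁿ⁺¹`
coordinatewise (McShane) to `F`, take a cover at scale `r ≈ 1/λ` by `n + 1` families, and give
coordinate `i` a sign `±1` on each member of the `i`-th family, agreeing with `F` there. Adding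
this sign field to `F`, with a weight growing from `0` on `A` to `1/4` away from `A`, gives a map
of norm `≥ 1/8`: near `A` because `F` is close to `f`, far from `A` because on a member of
diameter `≲ 1/λ` the sign outweighs the oscillation of `F`. Its radial projection is the
extension.

Conversely, let `X` have a cover by `k + 2` families, `k ≥ n`. The truncated distance functions
to the unions of the first `n + 1` families form a map `φ` into the cube; extending
`φ ∣ φ⁻¹(∂[-1,1]ⁿ⁺¹)` to `H : X → ∂[-1,1]ⁿ⁺¹` yields level sets `{H j = 1}`, `{H j = -1}` that
cover `X` and are far apart, and they tell each member of the last family how to split and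
which of the first families its pieces join. Descending from the finite dimension `N` gives `n`.
-/

open Metric Set

section Normed

variable {V W : Type*} [NormedAddCommGroup V] [NormedSpace ℝ V]
  [NormedAddCommGroup W] [NormedSpace ℝ W]

lemma norm_smul_sub_smul_le (a b : ℝ) (u v : V) :
    ‖a • u - b • v‖ ≤ |a| * ‖u - v‖ + |a - b| * ‖v‖ := by
  calc ‖a • u - b • v‖ = ‖a • (u - v) + (a - b) • v‖ := by
        rw [smul_sub, sub_smul, sub_add_sub_cancel]
    _ ≤ |a| * ‖u - v‖ + |a - b| * ‖v‖ := by
        simpa only [norm_smul, Real.norm_eq_abs] using norm_add_le (a • (u - v)) ((a - b) • v)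

lemma norm_inv_smul_sub_norm_inv_smul_le {δ : ℝ} (hδ : 0 < δ) {u v : V} (hu : δ ≤ ‖u‖)
    (hv : δ ≤ ‖v‖) : ‖‖u‖⁻¹ • u - ‖v‖⁻¹ • v‖ ≤ 2 / δ * ‖u - v‖ := by
  have hu0 : 0 < ‖u‖ := hδ.trans_le hu
  have hv0 : 0 < ‖v‖ := hδ.trans_le hv
  have hdiff : |‖u‖⁻¹ - ‖v‖⁻¹| * ‖v‖ = |‖v‖ - ‖u‖| / ‖u‖ := by
    rw [inv_sub_inv hu0.ne' hv0.ne', abs_div, abs_mul, abs_of_pos hu0, abs_of_pos hv0]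
    field_simp
  calc ‖‖u‖⁻¹ • u - ‖v‖⁻¹ • v‖ ≤ |‖u‖⁻¹| * ‖u - v‖ + |‖u‖⁻¹ - ‖v‖⁻¹| * ‖v‖ :=
        norm_smul_sub_smul_le _ _ _ _
    _ ≤ ‖u - v‖ / ‖u‖ + ‖u - v‖ / ‖u‖ := by
        rw [hdiff, abs_inv, abs_of_pos hu0, inv_mul_eq_div, abs_sub_comm]
        gcongr
        exact abs_norm_sub_norm_le u v
    _ ≤ ‖u - v‖ / δ + ‖u - v‖ / δ := by gcongr
    _ = 2 / δ * ‖u - v‖ := by ring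

lemma inv_norm_smul_mem_sphere {u : V} (hu : u ≠ 0) : ‖u‖⁻¹ • u ∈ sphere (0 : V) 1 := by
  rw [mem_sphere_zero_iff_norm, norm_smul, norm_inv, norm_norm,
    inv_mul_cancel₀ (norm_ne_zero_iff.2 hu)]

noncomputable def sphereRadialMap (e : V ≃L[ℝ] W) (v : sphere (0 : V) 1) : sphere (0 : W) 1 :=
  ⟨‖e v‖⁻¹ • e v, inv_norm_smul_mem_sphere (e.map_ne_zero_iff.2 (ne_zero_of_mem_unit_sphere v))⟩

lemma sphereRadialMap_symm_sphereRadialMap (e : V ≃L[ℝ] W) (v : sphere (0 : V) 1) :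
    sphereRadialMap e.symm (sphereRadialMap e v) = v := by
  have hv : (v : V) ≠ 0 := ne_zero_of_mem_unit_sphere v
  have hev : 0 < ‖e v‖ := norm_pos_iff.2 (e.map_ne_zero_iff.2 hv)
  apply Subtype.ext
  simp only [sphereRadialMap, map_smul, ContinuousLinearEquiv.symm_apply_apply, norm_smul,
    norm_inv, norm_norm, norm_eq_of_mem_sphere v, mul_one, inv_inv, smul_smul,
    mul_inv_cancel₀ hev.ne', one_smul]

lemma inv_norm_symm_add_one_le_norm_apply (e : V ≃L[ℝ] W) (v : sphere (0 : V) 1) :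
    (‖(e.symm : W →L[ℝ] V)‖ + 1)⁻¹ ≤ ‖e v‖ := by
  have h1 : 1 ≤ ‖(e.symm : W →L[ℝ] V)‖ * ‖e v‖ := by
    simpa [norm_eq_of_mem_sphere v] using (e.symm : W →L[ℝ] V).le_opNorm (e v)
  rw [inv_le_iff_one_le_mul₀ (by positivity)]
  nlinarith [norm_nonneg (e v)]

/-- The `+ 1`s only keep the constant positive without a case split. -/
lemma dist_sphereRadialMap_le (e : V ≃L[ℝ] W) (v w : sphere (0 : V) 1) :
    dist (sphereRadialMap e v) (sphereRadialMap e w) ≤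
      2 * (‖(e.symm : W →L[ℝ] V)‖ + 1) * (‖(e : V →L[ℝ] W)‖ + 1) * dist v w := by
  rw [Subtype.dist_eq, Subtype.dist_eq, dist_eq_norm, dist_eq_norm]
  calc ‖‖e v‖⁻¹ • e v - ‖e w‖⁻¹ • e w‖
      ≤ 2 / (‖(e.symm : W →L[ℝ] V)‖ + 1)⁻¹ * ‖e v - e w‖ :=
        norm_inv_smul_sub_norm_inv_smul_le (by positivity)
          (inv_norm_symm_add_one_le_norm_apply e v) (inv_norm_symm_add_one_le_norm_apply e w)
    _ ≤ 2 / (‖(e.symm : W →L[ℝ] V)‖ + 1)⁻¹ * ((‖(e : V →L[ℝ] W)‖ + 1) * ‖(v : V) - w‖) := by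
        rw [← map_sub]
        gcongr
        exact ((e : V →L[ℝ] W).le_opNorm _).trans (by gcongr; linarith)
    _ = _ := by rw [div_inv_eq_mul]; ring

end Normed

lemma exists_abs_apply_eq_norm {ι : Type*} [Fintype ι] [Nonempty ι] (v : ι → ℝ) :
    ∃ i, |v i| = ‖v‖ := by
  obtain ⟨i, -, hi⟩ := Finset.exists_mem_eq_sup Finset.univ Finset.univ_nonempty fun i => ‖v i‖₊
  exact ⟨i, by rw [← Real.norm_eq_abs, ← coe_nnnorm, ← coe_nnnorm, Pi.nnnorm_def, hi]⟩

section

variable {X : Type*} [MetricSpace X]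

lemma LargeScaleLipschitzExtensorOf.of_retract {E F : Type*} [MetricSpace E] [MetricSpace F]
    (h : LargeScaleLipschitzExtensorOf X E) (p : F → E) (q : E → F) (hqp : ∀ y, q (p y) = y)
    {K₁ K₂ : ℝ} (hK₁ : 0 < K₁) (hK₂ : 0 < K₂) (hp : ∀ y y', dist (p y) (p y') ≤ K₁ * dist y y')
    (hq : ∀ z z', dist (q z) (q z') ≤ K₂ * dist z z') : LargeScaleLipschitzExtensorOf X F := by
  obtain ⟨C, hC, M, hM, hext⟩ := h
  refine ⟨K₂ * C * K₁, by positivity, M / K₁, by positivity, fun A hA lam hlam hlamM f hf => ?_⟩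
  have hpf : ∀ a b : A, dist (p (f a)) (p (f b)) ≤ K₁ * lam * dist (a : X) b := fun a b =>
    (hp _ _).trans (by rw [mul_assoc]; gcongr; exact hf a b)
  obtain ⟨g, hgA, hg⟩ := hext A hA (K₁ * lam) (by positivity)
    (by rwa [lt_div_iff₀ hK₁, mul_comm] at hlamM) (p ∘ f) hpf
  refine ⟨q ∘ g, fun a => by simp [hgA, hqp], fun x y => (hq _ _).trans ?_⟩
  calc K₂ * dist (g x) (g y) ≤ K₂ * (C * (K₁ * lam) * dist x y) := by gcongr; exact hg x y
    _ = K₂ * C * K₁ * lam * dist x y := by ring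

lemma LargeScaleLipschitzExtensorOf.of_sphere_equiv {V W : Type*} [NormedAddCommGroup V]
    [NormedSpace ℝ V] [NormedAddCommGroup W] [NormedSpace ℝ W] (e : V ≃L[ℝ] W)
    (h : LargeScaleLipschitzExtensorOf X (sphere (0 : V) 1)) :
    LargeScaleLipschitzExtensorOf X (sphere (0 : W) 1) := by
  refine h.of_retract (sphereRadialMap e.symm) (sphereRadialMap e) (fun y => ?_)
    (by positivity) (by positivity) (dist_sphereRadialMap_le e.symm) (dist_sphereRadialMap_le e)
  simpa using sphereRadialMap_symm_sphereRadialMap e.symm y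

lemma exists_lipschitz_extension_pi {ι : Type*} [Fintype ι] {A : Set X} {L : ℝ} (hL : 0 ≤ L)
    (f : A → ι → ℝ) (hf : ∀ a b : A, dist (f a) (f b) ≤ L * dist (a : X) b) :
    ∃ F : X → ι → ℝ, (∀ a : A, F a = f a) ∧ ∀ x y, dist (F x) (F y) ≤ L * dist x y := by
  have hext : ∀ a : A, Function.extend Subtype.val f 0 a = f a :=
    Subtype.val_injective.extend_apply f 0
  have hlip : LipschitzOnWith L.toNNReal (Function.extend Subtype.val f 0) A :=
    LipschitzOnWith.of_dist_le_mul fun x hx y hy => by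
      simpa [Real.coe_toNNReal L hL, hext ⟨x, hx⟩, hext ⟨y, hy⟩] using hf ⟨x, hx⟩ ⟨y, hy⟩
  obtain ⟨F, hF, hFA⟩ := hlip.extend_pi
  exact ⟨F, fun a => (hFA a.2).symm.trans (hext a),
    fun x y => by simpa [Real.coe_toNNReal L hL] using hF.dist_le_mul x y⟩

lemma exists_lipschitz_eq_one_eq_neg_one {P Q : Set X} {δ : ℝ} (hδ : 0 < δ)
    (hPQ : ∀ x ∈ P, ∀ y ∈ Q, δ ≤ dist x y) :
    ∃ φ : X → ℝ, (∀ x ∈ P, φ x = 1) ∧ (∀ y ∈ Q, φ y = -1) ∧ (∀ x, |φ x| ≤ 1) ∧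
      ∀ x y, dist (φ x) (φ y) ≤ 2 / δ * dist x y := by
  classical
  have hQ : ∀ y ∈ Q, y ∉ P := fun y hy hyP => by linarith [hPQ y hyP y hy, dist_self y]
  set f : X → ℝ := fun x => if x ∈ P then 1 else -1
  have key : ∀ x ∈ P, ∀ y ∈ Q, dist (f x) (f y) ≤ 2 / δ * dist x y := fun x hx y hy => by
    simp only [f, Real.dist_eq, if_pos hx, if_neg (hQ y hy)]
    rw [div_mul_eq_mul_div, le_div_iff₀ hδ]
    norm_num
    linarith [hPQ x hx y hy]
  have hlip : LipschitzOnWith (2 / δ).toNNReal f (P ∪ Q) := by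
    refine LipschitzOnWith.of_dist_le_mul fun x hx y hy => ?_
    rw [Real.coe_toNNReal _ (by positivity)]
    by_cases hxP : x ∈ P <;> by_cases hyP : y ∈ P
    · simp only [f, if_pos hxP, if_pos hyP, dist_self]; positivity
    · exact key x hxP y (hy.resolve_left hyP)
    · rw [dist_comm, dist_comm x]; exact key y hyP x (hx.resolve_left hxP)
    · simp only [f, if_neg hxP, if_neg hyP, dist_self]; positivity
  obtain ⟨g, hg, hfg⟩ := hlip.extend_real
  refine ⟨fun x => max (-1) (min 1 (g x)), fun x hx => ?_, fun y hy => ?_,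
    fun x => abs_le.2 ⟨le_max_left _ _, max_le (by norm_num) (min_le_left _ _)⟩, fun x y => ?_⟩
  · simp [← hfg (Or.inl hx), f, hx]
  · simp [← hfg (Or.inr hy), f, hQ y hy]
  · simpa [Real.coe_toNNReal _ (div_nonneg zero_le_two hδ.le)] using
      ((hg.const_min 1).const_max (-1)).dist_le_mul x y

lemma exists_lipschitz_pi_eq_one_eq_neg_one {ι : Type*} [Fintype ι] {P Q : ι → Set X} {δ : ℝ}
    (hδ : 0 < δ) (hPQ : ∀ i, ∀ x ∈ P i, ∀ y ∈ Q i, δ ≤ dist x y) :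
    ∃ φ : X → ι → ℝ, (∀ i, ∀ x ∈ P i, φ x i = 1) ∧ (∀ i, ∀ y ∈ Q i, φ y i = -1) ∧
      (∀ x, ‖φ x‖ ≤ 1) ∧ ∀ x y, dist (φ x) (φ y) ≤ 2 / δ * dist x y := by
  choose φ hP hQ hbd hlip using fun i => exists_lipschitz_eq_one_eq_neg_one hδ (hPQ i)
  exact ⟨fun x i => φ i x, hP, hQ,
    fun x => (pi_norm_le_iff_of_nonneg zero_le_one).2 fun i => hbd i x,
    fun x y => (dist_pi_le_iff (by positivity)).2 fun i => hlip i x y⟩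

lemma le_mul_infDist_of_nonpos {h : X → ℝ} {L : ℝ} (hL : 0 ≤ L)
    (hh : ∀ x y, h x - h y ≤ L * dist x y) {A : Set X} (hA : A.Nonempty)
    (hA0 : ∀ a ∈ A, h a ≤ 0) (x : X) : h x ≤ L * infDist x A := by
  rcases hL.eq_or_lt with rfl | hL
  · obtain ⟨a, ha⟩ := hA
    linarith [hh x a, hA0 a ha]
  · rw [← div_le_iff₀' hL, le_infDist hA]
    intro a ha
    rw [div_le_iff₀' hL]
    linarith [hh x a, hA0 a ha]

lemma dist_min_mul_infDist_le (c : ℝ) {L : ℝ} (hL : 0 ≤ L) (A : Set X) (x y : X) :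
    dist (min c (L * infDist x A)) (min c (L * infDist y A)) ≤ L * dist x y := by
  rw [Real.dist_eq]
  refine (abs_min_sub_min_le_max _ _ _ _).trans ?_
  rw [sub_self, abs_zero, ← mul_sub, abs_mul, abs_of_nonneg hL]
  have hinf : |infDist x A - infDist y A| ≤ dist x y := by
    simpa [Real.dist_eq] using (lipschitz_infDist_pt A).dist_le_mul x y
  exact max_le (by positivity) (by gcongr)

lemma exists_sign_field {ι : Type*} [Fintype ι] {U : ι → Set (Set X)} {r : ℝ} (hr : 0 < r)
    (hU : ∀ i, ∀ V ∈ U i, ∀ W ∈ U i, V ≠ W → ∀ x ∈ V, ∀ y ∈ W, r < dist x y)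
    (F : X → ι → ℝ) :
    ∃ E : X → ι → ℝ, (∀ x, ‖E x‖ ≤ 1) ∧ (∀ x y, dist (E x) (E y) ≤ 2 / r * dist x y) ∧
      ∀ i, ∀ V ∈ U i, ∀ x ∈ V, (E x i = 1 ∧ ∃ a ∈ V, 0 ≤ F a i) ∨ (E x i = -1 ∧ F x i < 0) := by
  obtain ⟨E, hP, hQ, hE1, hE⟩ := exists_lipschitz_pi_eq_one_eq_neg_one hr
    (P := fun i => {x | ∃ V ∈ U i, x ∈ V ∧ ∃ a ∈ V, 0 ≤ F a i})
    (Q := fun i => {x | ∃ V ∈ U i, x ∈ V ∧ ∀ a ∈ V, F a i < 0}) <| by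
      rintro i x ⟨V, hV, hxV, a, haV, ha⟩ y ⟨W, hW, hyW, hneg⟩
      have hVW : V ≠ W := by rintro rfl; linarith [hneg a haV]
      exact (hU i V hV W hW hVW x hxV y hyW).le
  refine ⟨E, hE1, hE, fun i V hV x hxV => ?_⟩
  by_cases hsign : ∃ a ∈ V, 0 ≤ F a i
  · exact Or.inl ⟨hP i x ⟨V, hV, hxV, hsign⟩, hsign⟩
  · push Not at hsign
    exact Or.inr ⟨hQ i x ⟨V, hV, hxV, hsign⟩, hsign x hxV⟩

lemma dist_add_smul_le {V : Type*} [NormedAddCommGroup V] [NormedSpace ℝ V] {F E : X → V}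
    {s : X → ℝ} {K L M c : ℝ} (hF : ∀ x y, dist (F x) (F y) ≤ K * dist x y)
    (hE : ∀ x y, dist (E x) (E y) ≤ L * dist x y) (hE1 : ∀ x, ‖E x‖ ≤ 1)
    (hs : ∀ x y, dist (s x) (s y) ≤ M * dist x y) (hs0 : ∀ x, 0 ≤ s x) (hsc : ∀ x, s x ≤ c)
    (x y : X) : dist (F x + s x • E x) (F y + s y • E y) ≤ (K + c * L + M) * dist x y := by
  rw [dist_eq_norm, add_sub_add_comm]
  calc ‖F x - F y + (s x • E x - s y • E y)‖
      ≤ ‖F x - F y‖ + (|s x| * ‖E x - E y‖ + |s x - s y| * ‖E y‖) :=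
        (norm_add_le _ _).trans (add_le_add le_rfl (norm_smul_sub_smul_le _ _ _ _))
    _ ≤ K * dist x y + (c * (L * dist x y) + M * dist x y * 1) := by
        rw [abs_of_nonneg (hs0 x), ← dist_eq_norm, ← dist_eq_norm, ← Real.dist_eq]
        gcongr
        exacts [hF x y, (hs0 x).trans (hsc x), hsc x, hE x y, dist_nonneg.trans (hs x y), hs x y,
          hE1 y]
    _ = (K + c * L + M) * dist x y := by ring

lemma exists_extension_norm_ge {ι : Type*} [Fintype ι] {A : Set X} (hA : A.Nonempty)
    {U : ι → Set (Set X)} {r D lam : ℝ} (hr : 0 < r) (hlam : 0 < lam) (hD : 8 * lam * D ≤ 1)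
    (hcov : ∀ x, ∃ i, ∃ V ∈ U i, x ∈ V)
    (hdisj : ∀ i, ∀ V ∈ U i, ∀ W ∈ U i, V ≠ W → ∀ x ∈ V, ∀ y ∈ W, r < dist x y)
    (hdiam : ∀ i, ∀ V ∈ U i, ∀ x ∈ V, ∀ y ∈ V, dist x y ≤ D)
    (f : A → ι → ℝ) (hf1 : ∀ a, ‖f a‖ = 1)
    (hf : ∀ a b : A, dist (f a) (f b) ≤ lam * dist (a : X) b) :
    ∃ G : X → ι → ℝ, (∀ a : A, G a = f a) ∧ (∀ x, 1 / 8 ≤ ‖G x‖) ∧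
      ∀ x y, dist (G x) (G y) ≤ (2 * lam + 1 / (2 * r)) * dist x y := by
  obtain ⟨F, hFA, hF⟩ := exists_lipschitz_extension_pi hlam.le f hf
  obtain ⟨E, hE1, hE, hEsign⟩ := exists_sign_field hr hdisj F
  set s : X → ℝ := fun x => min (1 / 4) (lam * infDist x A) with hs
  have hs0 : ∀ x, 0 ≤ s x := fun x => le_min (by norm_num) (mul_nonneg hlam.le infDist_nonneg)
  have hsA : ∀ a : A, s a = 0 := fun a => by simp [hs, infDist_zero_of_mem a.2]
  refine ⟨fun x => F x + s x • E x, fun a => by simp [hsA, hFA], fun x => ?_, fun x y => ?_⟩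
  · have hFx : 1 - ‖F x‖ ≤ lam * infDist x A := by
      refine le_mul_infDist_of_nonpos (h := fun x => 1 - ‖F x‖) hlam.le (fun x y => ?_) hA
        (fun a ha => by simp [hFA ⟨a, ha⟩, hf1]) x
      linarith [norm_sub_norm_le (F y) (F x), norm_sub_rev (F y) (F x), dist_eq_norm (F x) (F y),
        hF x y]
    rcases le_or_gt (lam * infDist x A) (1 / 4) with hnear | hfar
    · have hsE : ‖s x • E x‖ ≤ lam * infDist x A := by
        rw [norm_smul, Real.norm_eq_abs, abs_of_nonneg (hs0 x)]
        exact (mul_le_of_le_one_right (hs0 x) (hE1 x)).trans (min_le_right _ _)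
      linarith [norm_le_add_norm_add (F x) (s x • E x)]
    · have hsx : s x = 1 / 4 := min_eq_left hfar.le
      obtain ⟨i, V, hV, hxV⟩ := hcov x
      have hFV : ∀ a ∈ V, |F x i - F a i| ≤ 1 / 8 := fun a ha => by
        rw [← Real.dist_eq]
        calc dist (F x i) (F a i) ≤ lam * dist x a := (dist_le_pi_dist _ _ i).trans (hF x a)
          _ ≤ lam * D := by gcongr; exact hdiam i V hV x hxV a ha
          _ ≤ 1 / 8 := by linarith
      have hGi : 1 / 8 ≤ |F x i + s x * E x i| := by
        rcases hEsign i V hV x hxV with ⟨hEx, a, ha, hFa⟩ | ⟨hEx, hFx⟩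
        · rw [hEx, hsx]
          linarith [le_abs_self (F x i + 1 / 4 * 1), neg_abs_le (F x i - F a i), hFV a ha]
        · rw [hEx, hsx]
          linarith [neg_abs_le (F x i + 1 / 4 * -1)]
      exact hGi.trans (norm_le_pi_norm (F x + s x • E x) i)
  · calc dist (F x + s x • E x) (F y + s y • E y) ≤ (lam + 1 / 4 * (2 / r) + lam) * dist x y :=
          dist_add_smul_le hF hE hE1 (fun x y => dist_min_mul_infDist_le _ hlam.le A x y) hs0
            (fun x => min_le_left _ _) x y
      _ = (2 * lam + 1 / (2 * r)) * dist x y := by field_simp; ring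

theorem HigsonAsdimLE.largeScaleLipschitzExtensorOf_sphere_pi {n : ℕ} (h : HigsonAsdimLE X n) :
    LargeScaleLipschitzExtensorOf X (sphere (0 : Fin (n + 1) → ℝ) 1) := by
  obtain ⟨C₀, hC₀, M₀, hM₀, hcov⟩ := h
  refine ⟨16 * (2 + 4 * C₀), by positivity, 1 / (8 * C₀ * M₀), by positivity,
    fun A hA lam hlam hlamM f hf => ?_⟩
  set r := 1 / (8 * C₀ * lam) with hr
  have hrM : M₀ < r := by
    rw [lt_div_iff₀ (by positivity)] at hlamM
    rw [hr, lt_div_iff₀ (by positivity)]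
    linarith
  obtain ⟨U, hUcov, hUdisj, hUdiam⟩ := hcov r hrM
  obtain ⟨G, hGA, hG1, hG⟩ := exists_extension_norm_ge hA (by positivity) hlam
    (le_of_eq (by rw [hr]; field_simp)) hUcov hUdisj hUdiam (fun a => (f a : Fin (n + 1) → ℝ))
    (fun a => norm_eq_of_mem_sphere (f a)) hf
  have hG0 : ∀ x, G x ≠ 0 := fun x => norm_pos_iff.1 (by linarith [hG1 x])
  refine ⟨fun x => ⟨‖G x‖⁻¹ • G x, inv_norm_smul_mem_sphere (hG0 x)⟩, fun a => ?_, fun x y => ?_⟩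
  · ext1
    simp [hGA, norm_eq_of_mem_sphere (f a)]
  · rw [Subtype.dist_eq, dist_eq_norm]
    calc ‖‖G x‖⁻¹ • G x - ‖G y‖⁻¹ • G y‖ ≤ 2 / (1 / 8) * ‖G x - G y‖ :=
          norm_inv_smul_sub_norm_inv_smul_le (by norm_num) (hG1 x) (hG1 y)
      _ ≤ 16 * ((2 * lam + 1 / (2 * r)) * dist x y) := by
          rw [← dist_eq_norm]; linarith [hG x y]
      _ = 16 * (2 + 4 * C₀) * lam * dist x y := by rw [hr]; field_simp; ring

theorem HigsonAsdimLE.mono {m n : ℕ} (hmn : m ≤ n) (h : HigsonAsdimLE X m) :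
    HigsonAsdimLE X n := by
  obtain ⟨C, hC, M, hM, hcov⟩ := h
  refine ⟨C, hC, M, hM, fun r hr => ?_⟩
  obtain ⟨U, hUcov, hUdisj, hUdiam⟩ := hcov r hr
  have hle : m + 1 ≤ n + 1 := by omega
  refine ⟨fun j => {V | ∃ i, Fin.castLE hle i = j ∧ V ∈ U i}, fun x => ?_, ?_, ?_⟩
  · obtain ⟨i, V, hV, hxV⟩ := hUcov x
    exact ⟨Fin.castLE hle i, V, ⟨i, rfl, hV⟩, hxV⟩
  · rintro j V ⟨i, rfl, hV⟩ W ⟨i', hi', hW⟩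
    rw [Fin.castLE_injective hle hi'] at hW
    exact hUdisj i V hV W hW
  · rintro j V ⟨i, rfl, hV⟩
    exact hUdiam i V hV

def absorbLastFamily {k : ℕ} (U : Fin (k + 2) → Set (Set X)) (P Q : Fin (k + 1) → Set X)
    (s : ℝ) (j : Fin (k + 1)) : Set (Set X) :=
  (fun V => P j ∩ thickening s V) '' U j.castSucc ∪ (fun W => W ∩ Q j) '' U (Fin.last (k + 1))

section AbsorbLastFamily

variable {k : ℕ} {U : Fin (k + 2) → Set (Set X)} {P Q : Fin (k + 1) → Set X} {s : ℝ}

lemma exists_mem_absorbLastFamily (hs : 0 < s) (hcov : ∀ x, ∃ i, ∃ V ∈ U i, x ∈ V)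
    (hPQ : ∀ x, ∃ j, x ∈ P j ∨ x ∈ Q j) (hUP : ∀ j, ⋃₀ U j.castSucc ⊆ P j)
    (hPU : ∀ j, P j ⊆ thickening s (⋃₀ U j.castSucc)) (x : X) :
    ∃ j, ∃ V ∈ absorbLastFamily U P Q s j, x ∈ V := by
  obtain ⟨i, W, hW, hxW⟩ := hcov x
  induction i using Fin.lastCases with
  | cast j => exact ⟨j, _, Or.inl ⟨W, hW, rfl⟩, hUP j ⟨W, hW, hxW⟩, self_subset_thickening hs W hxW⟩
  | last =>
    obtain ⟨j, hxP | hxQ⟩ := hPQ x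
    · obtain ⟨y, ⟨V, hV, hyV⟩, hxy⟩ := mem_thickening_iff.1 (hPU j hxP)
      exact ⟨j, _, Or.inl ⟨V, hV, rfl⟩, hxP, mem_thickening_iff.2 ⟨y, hyV, hxy⟩⟩
    · exact ⟨j, _, Or.inr ⟨W, hW, rfl⟩, hxW, hxQ⟩

lemma lt_dist_of_mem_absorbLastFamily (hs : 0 ≤ s) {r S : ℝ} (hS : r + 2 * s ≤ S)
    (hdisj : ∀ i, ∀ V ∈ U i, ∀ W ∈ U i, V ≠ W → ∀ x ∈ V, ∀ y ∈ W, S < dist x y)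
    (hsep : ∀ j, ∀ x ∈ P j, ∀ y ∈ Q j, r < dist x y) :
    ∀ j, ∀ Y ∈ absorbLastFamily U P Q s j, ∀ Z ∈ absorbLastFamily U P Q s j, Y ≠ Z →
      ∀ x ∈ Y, ∀ y ∈ Z, r < dist x y := by
  intro j Y hY Z hZ hYZ x hx y hy
  rcases hY with ⟨V, hV, rfl⟩ | ⟨W, hW, rfl⟩ <;> rcases hZ with ⟨V', hV', rfl⟩ | ⟨W', hW', rfl⟩
  · obtain ⟨v, hv, hxv⟩ := mem_thickening_iff.1 hx.2
    obtain ⟨v', hv', hyv'⟩ := mem_thickening_iff.1 hy.2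
    have hVV' : V ≠ V' := by rintro rfl; exact hYZ rfl
    linarith [hdisj _ V hV V' hV' hVV' v hv v' hv', dist_triangle4 v x y v', dist_comm v x]
  · exact hsep j x hx.1 y hy.2
  · rw [dist_comm]; exact hsep j y hy.1 x hx.2
  · have hWW' : W ≠ W' := by rintro rfl; exact hYZ rfl
    linarith [hdisj _ W hW W' hW' hWW' x hx.1 y hy.1]

lemma dist_le_of_mem_absorbLastFamily (hs : 0 ≤ s) {D : ℝ}
    (hdiam : ∀ i, ∀ V ∈ U i, ∀ x ∈ V, ∀ y ∈ V, dist x y ≤ D) :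
    ∀ j, ∀ Y ∈ absorbLastFamily U P Q s j, ∀ x ∈ Y, ∀ y ∈ Y, dist x y ≤ D + 2 * s := by
  intro j Y hY x hx y hy
  rcases hY with ⟨V, hV, rfl⟩ | ⟨W, hW, rfl⟩
  · obtain ⟨v, hv, hxv⟩ := mem_thickening_iff.1 hx.2
    obtain ⟨v', hv', hyv'⟩ := mem_thickening_iff.1 hy.2
    linarith [hdiam _ V hV v hv v' hv', dist_triangle4 x v v' y, dist_comm y v']
  · linarith [hdiam _ W hW x hx.1 y hy.1]

end AbsorbLastFamily

lemma LargeScaleLipschitzExtensorOf.exists_separated_level_sets {n : ℕ}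
    (h : LargeScaleLipschitzExtensorOf X (sphere (0 : Fin (n + 1) → ℝ) 1)) :
    ∃ C > 0, ∃ M > 0, ∀ s > M, ∀ D : Fin (n + 1) → Set X, ∃ P Q : Fin (n + 1) → Set X,
      (∀ x, ∃ j, x ∈ P j ∨ x ∈ Q j) ∧ (∀ j, D j ⊆ P j) ∧ (∀ j, P j ⊆ thickening s (D j)) ∧
      ∀ j, ∀ x ∈ P j, ∀ y ∈ Q j, s ≤ C * dist x y := by
  obtain ⟨C, hC, M, hM, hext⟩ := h
  refine ⟨C, hC, 2 / M, by positivity, fun s hs D => ?_⟩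
  have hs0 : 0 < s := (by positivity : (0 : ℝ) < 2 / M).trans hs
  obtain ⟨φ, hφD, hφfar, hφ1, hφ⟩ := exists_lipschitz_pi_eq_one_eq_neg_one hs0
    (P := D) (Q := fun j => (thickening s (D j))ᶜ) fun j x hx y hy => by
      rw [dist_comm]; exact not_lt.1 fun hlt => hy (mem_thickening_iff.2 ⟨x, hx, hlt⟩)
  set A := {x | ‖φ x‖ = 1}
  have hA : ∀ x j, |φ x j| = 1 → x ∈ A := fun x j hj =>
    le_antisymm (hφ1 x) (hj ▸ norm_le_pi_norm (φ x) j)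
  obtain ⟨H, hHA, hH⟩ : ∃ H : X → sphere (0 : Fin (n + 1) → ℝ) 1,
      (∀ x ∈ A, (H x : Fin (n + 1) → ℝ) = φ x) ∧
        ∀ x y, dist (H x) (H y) ≤ C * (2 / s) * dist x y := by
    rcases A.eq_empty_or_nonempty with hA0 | hA0
    · exact ⟨fun _ => ⟨fun _ => 1, by simp⟩, by simp [hA0],
        fun x y => by rw [dist_self]; positivity⟩
    · obtain ⟨H, hHA, hH⟩ := hext A hA0 (2 / s) (by positivity) ((div_lt_comm₀ hM hs0).1 hs)
        (fun a => ⟨φ a, mem_sphere_zero_iff_norm.2 a.2⟩) (fun a b => hφ a b)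
      exact ⟨H, fun x hx => congrArg Subtype.val (hHA ⟨x, hx⟩), hH⟩
  refine ⟨fun j => {x | (H x : Fin (n + 1) → ℝ) j = 1},
    fun j => {x | (H x : Fin (n + 1) → ℝ) j = -1}, fun x => ?_, fun j x hx => ?_,
    fun j x hx => ?_, fun j x hx y hy => ?_⟩
  · obtain ⟨j, hj⟩ := exists_abs_apply_eq_norm (H x : Fin (n + 1) → ℝ)
    rw [norm_eq_of_mem_sphere (H x)] at hj
    exact ⟨j, (abs_eq zero_le_one).1 hj⟩
  · show (H x : Fin (n + 1) → ℝ) j = 1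
    rw [hHA x (hA x j (by simp [hφD j x hx])), hφD j x hx]
  · by_contra hfar
    have hφx := hφfar j x hfar
    have hHx : (H x : Fin (n + 1) → ℝ) j = -1 := by rw [hHA x (hA x j (by simp [hφx])), hφx]
    norm_num [show (H x : Fin (n + 1) → ℝ) j = 1 from hx] at hHx
  · have h2 : 2 ≤ C * (2 / s) * dist x y :=
      calc (2 : ℝ) = dist ((H x : Fin (n + 1) → ℝ) j) ((H y : Fin (n + 1) → ℝ) j) := by
            rw [Real.dist_eq, show (H x : Fin (n + 1) → ℝ) j = 1 from hx,
              show (H y : Fin (n + 1) → ℝ) j = -1 from hy]; norm_num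
        _ ≤ dist (H x) (H y) := (dist_le_pi_dist _ _ j).trans_eq (Subtype.dist_eq _ _).symm
        _ ≤ C * (2 / s) * dist x y := hH x y
    rw [mul_comm C, mul_assoc, div_mul_eq_mul_div, le_div_iff₀ hs0] at h2
    linarith

theorem HigsonAsdimLE.of_succ {n k : ℕ} (hnk : n ≤ k)
    (hext : LargeScaleLipschitzExtensorOf X (sphere (0 : Fin (n + 1) → ℝ) 1))
    (h : HigsonAsdimLE X (k + 1)) : HigsonAsdimLE X k := by
  obtain ⟨C, hC, M, hM, hlevel⟩ := hext.exists_separated_level_sets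
  obtain ⟨C₀, hC₀, M₀, hM₀, hcov⟩ := h
  refine ⟨C₀ * (1 + 4 * C) + 4 * C, by positivity, max M₀ (M / (2 * C)), by positivity,
    fun r hr => ?_⟩
  rw [max_lt_iff, div_lt_iff₀ (by positivity)] at hr
  have hr0 : 0 < r := hM₀.trans hr.1
  set s := 2 * C * r with hs
  have hs0 : 0 < s := by positivity
  obtain ⟨U, hUcov, hUdisj, hUdiam⟩ := hcov (r + 2 * s) (by linarith [hr.1])
  have hle : n + 1 ≤ k + 1 := by omega
  obtain ⟨P, Q, hPQ, hUP, hPU, hsep⟩ :=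
    hlevel s (by linarith [hr.2]) fun i => ⋃₀ U (Fin.castLE hle i).castSucc
  set P' : Fin (k + 1) → Set X := fun j =>
    if hj : (j : ℕ) < n + 1 then P ⟨j, hj⟩ else ⋃₀ U j.castSucc
  set Q' : Fin (k + 1) → Set X := fun j => if hj : (j : ℕ) < n + 1 then Q ⟨j, hj⟩ else ∅
  have hPQ' : ∀ x, ∃ j, x ∈ P' j ∨ x ∈ Q' j := fun x => by
    obtain ⟨i, hi⟩ := hPQ x
    exact ⟨Fin.castLE hle i, by simpa only [P', Q', Fin.val_castLE, dif_pos i.2, Fin.eta] using hi⟩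
  have hUP' : ∀ j, ⋃₀ U j.castSucc ⊆ P' j := fun j => by
    by_cases hj : (j : ℕ) < n + 1
    · simp only [P', dif_pos hj]; exact hUP ⟨j, hj⟩
    · simp only [P', dif_neg hj, subset_rfl]
  have hPU' : ∀ j, P' j ⊆ thickening s (⋃₀ U j.castSucc) := fun j => by
    by_cases hj : (j : ℕ) < n + 1
    · simp only [P', dif_pos hj]; exact hPU ⟨j, hj⟩
    · simp only [P', dif_neg hj]; exact self_subset_thickening hs0 _
  have hsep' : ∀ j, ∀ x ∈ P' j, ∀ y ∈ Q' j, r < dist x y := fun j x hx y hy => by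
    by_cases hj : (j : ℕ) < n + 1
    · simp only [P', Q', dif_pos hj] at hx hy
      nlinarith [hsep _ x hx y hy]
    · simp only [Q', dif_neg hj, mem_empty_iff_false] at hy
  refine ⟨absorbLastFamily U P' Q' s, exists_mem_absorbLastFamily hs0 hUcov hPQ' hUP' hPU',
    lt_dist_of_mem_absorbLastFamily hs0.le le_rfl hUdisj hsep', fun j V hV x hx y hy => ?_⟩
  exact (dist_le_of_mem_absorbLastFamily hs0.le hUdiam j V hV x hx y hy).trans_eq
    (by rw [hs]; ring)

theorem LargeScaleLipschitzExtensorOf.higsonAsdimLE {n N : ℕ}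
    (hext : LargeScaleLipschitzExtensorOf X (sphere (0 : Fin (n + 1) → ℝ) 1))
    (hN : HigsonAsdimLE X N) : HigsonAsdimLE X n := by
  have descend : ∀ d, HigsonAsdimLE X (n + d) → HigsonAsdimLE X n := by
    intro d
    induction d with
    | zero => exact id
    | succ d ih => exact fun h => ih (h.of_succ (Nat.le_add_right n d) hext)
  exact descend N (hN.mono (Nat.le_add_left N n))

end

theorem sphere_large_scale_extensor_iff_higson_asdim
    {X : Type*} [MetricSpace X] (N : ℕ) (hN : HigsonAsdimLE X N) (n : ℕ) :
    LargeScaleLipschitzExtensorOf X (Metric.sphere (0 : EuclideanSpace ℝ (Fin (n + 1))) 1) ↔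
      HigsonAsdimLE X n :=
  ⟨fun h => (h.of_sphere_equiv (EuclideanSpace.equiv (Fin (n + 1)) ℝ)).higsonAsdimLE hN,
    fun h => h.largeScaleLipschitzExtensorOf_sphere_pi.of_sphere_equiv
      (EuclideanSpace.equiv (Fin (n + 1)) ℝ).symm⟩
end

section
/- For a metric space X the following are equivalent: (a) the asymptotic dimension of X with the Higson property is at most 0; (b) every nonempty discrete metric space Y is a large scale Lipschitz extensor of X; (c) the two-point space S⁰ = {−1, 1} ⊆ ℝ is a large scale Lipschitz extensor of X. -/
/-! Asymptotic dimension `0` with the Higson property says exactly that the `r`-chain components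
of `X` have diameter at most `C·r` for all large `r`.

Given this, a `λ`-Lipschitz map `f : A → Y` into a `δ`-discrete space extends as `f ∘ ρ`, where
`ρ x ∈ A` is picked in the `R·2^k`-chain component of `x` for the least `k` at which that component
meets `A`, with `R = δ/(Cλ)`. Comparing the levels of two points shows that `ρ` is Lipschitz with a
constant depending only on `C`, while `ρ` moves points of `A` by at most `C·R`, a displacement `f`
cannot see.

Conversely, if `x` and `y` are `r`-chain connected, extend the map sending them to two distinct
points of a discrete space with `λ ≈ 1/r`: the extension is constant along `r`-chains, so the
Lipschitz condition on `{x, y}` forces `dist x y ≲ r`. -/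

section ChainComponents

variable {X : Type*} [MetricSpace X]

def ChainConnected (r : ℝ) : X → X → Prop :=
  Relation.ReflTransGen fun x y => dist x y ≤ r

namespace ChainConnected

variable {r : ℝ} {x y z : X}

theorem refl (x : X) : ChainConnected r x x := Relation.ReflTransGen.refl

theorem of_dist_le (h : dist x y ≤ r) : ChainConnected r x y := Relation.ReflTransGen.single h

theorem trans (hxy : ChainConnected r x y) (hyz : ChainConnected r y z) : ChainConnected r x z :=
  Relation.ReflTransGen.trans hxy hyz

theorem symm (h : ChainConnected r x y) : ChainConnected r y x := by
  have : Std.Symm fun u v : X => dist u v ≤ r := ⟨fun u v h => (dist_comm v u).trans_le h⟩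
  exact Relation.ReflTransGen.stdSymm.symm _ _ h

theorem lt_dist_of_not (h : ¬ChainConnected r x y) : r < dist x y :=
  lt_of_not_ge fun hxy => h (of_dist_le hxy)

theorem mem_of_mem {V : Set X} (hV : ∀ u ∈ V, ∀ v, dist u v ≤ r → v ∈ V)
    (h : ChainConnected r x y) (hx : x ∈ V) : y ∈ V := by
  induction h with
  | refl => exact hx
  | tail _ hstep ih => exact hV _ ih _ hstep

end ChainConnected

variable (X) in
def BoundedChainComponents (C M : ℝ) : Prop :=
  ∀ r, M < r → ∀ x y : X, ChainConnected r x y → dist x y ≤ C * r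

theorem higsonAsdimLE_zero_iff_boundedChainComponents :
    HigsonAsdimLE X 0 ↔ ∃ C, 0 < C ∧ ∃ M, 0 < M ∧ BoundedChainComponents X C M := by
  refine exists_congr fun C => and_congr_right fun _ => exists_congr fun M =>
    and_congr_right fun _ => forall₂_congr fun r hr => ⟨?_, fun hB => ?_⟩
  · rintro ⟨U, hcover, hdisjoint, hdiam⟩ x y hxy
    obtain ⟨i, V, hV, hx⟩ := hcover x
    have hy : y ∈ V := by
      refine hxy.mem_of_mem (fun u hu v huv => ?_) hx
      obtain ⟨j, W, hW, hv⟩ := hcover v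
      rw [Subsingleton.elim (α := Fin 1) j i] at hW
      by_contra hvV
      have hVW : V ≠ W := fun h => hvV (h ▸ hv)
      exact (hdisjoint i V hV W hW hVW u hu v hv).not_ge huv
    exact hdiam i V hV x hx y hy
  · refine ⟨fun _ => Set.range fun a => {z | ChainConnected r a z}, fun x => ?_, ?_, ?_⟩
    · exact ⟨0, _, ⟨x, rfl⟩, ChainConnected.refl x⟩
    · rintro _ _ ⟨a, rfl⟩ _ ⟨b, rfl⟩ hne x hx y hy
      by_contra! hxy
      have hab : ChainConnected r a b := (hx.trans (.of_dist_le hxy)).trans hy.symm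
      exact hne (Set.ext fun z => ⟨hab.symm.trans, hab.trans⟩)
    · rintro _ _ ⟨a, rfl⟩ x hx y hy
      exact hB x y (hx.symm.trans hy)

end ChainComponents

section CoarseRetraction

variable {X : Type*} [MetricSpace X] (R : ℝ) (A : Set X)

noncomputable def chainLevel (x : X) : ℕ :=
  sInf {k | ∃ a ∈ A, ChainConnected (R * 2 ^ k) x a}

/-- The predicate under `Classical.epsilon` depends only on the chain component of `x`, so the
chosen point is the same for all points of that component. -/
noncomputable def chainAnchor (k : ℕ) (x : X) : X :=
  @Classical.epsilon X ⟨x⟩ fun a => a ∈ A ∧ ChainConnected (R * 2 ^ k) x a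

noncomputable def coarseRetraction (x : X) : X :=
  chainAnchor R A (chainLevel R A x) x

variable {R A} {x y : X}

theorem exists_chainConnected_mem (hA : A.Nonempty) (hR : 0 < R) (x : X) :
    ∃ k, ∃ a ∈ A, ChainConnected (R * 2 ^ k) x a := by
  obtain ⟨a, ha⟩ := hA
  obtain ⟨k, hk⟩ := pow_unbounded_of_one_lt (dist x a / R) one_lt_two
  exact ⟨k, a, ha, .of_dist_le ((div_lt_iff₀' hR).mp hk).le⟩

theorem chainAnchor_eq_of_chainConnected {k : ℕ} (h : ChainConnected (R * 2 ^ k) x y) :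
    chainAnchor R A k x = chainAnchor R A k y := by
  unfold chainAnchor
  congr 1
  ext a
  exact and_congr_right fun _ => ⟨h.symm.trans, h.trans⟩

theorem coarseRetraction_spec (hA : A.Nonempty) (hR : 0 < R) (x : X) :
    coarseRetraction R A x ∈ A ∧
      ChainConnected (R * 2 ^ chainLevel R A x) x (coarseRetraction R A x) :=
  Classical.epsilon_spec (Nat.sInf_mem (exists_chainConnected_mem hA hR x))

theorem chainLevel_eq_zero {a : X} (ha : a ∈ A) : chainLevel R A a = 0 :=
  Nat.sInf_eq_zero.mpr (.inl ⟨a, ha, .refl a⟩)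

theorem coarseRetraction_eq_of_chainConnected (hA : A.Nonempty) (hR : 0 < R)
    (hle : chainLevel R A x ≤ chainLevel R A y)
    (h : ChainConnected (R * 2 ^ chainLevel R A x) x y) :
    coarseRetraction R A x = coarseRetraction R A y := by
  obtain ⟨hxA, hx⟩ := coarseRetraction_spec hA hR x
  have hge : chainLevel R A y ≤ chainLevel R A x := Nat.sInf_le ⟨_, hxA, h.symm.trans hx⟩
  unfold coarseRetraction
  rw [← le_antisymm hle hge]
  exact chainAnchor_eq_of_chainConnected h

variable {C M : ℝ} (hB : BoundedChainComponents X C M) (hA : A.Nonempty) (hR : 0 < R)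
  (hMR : M < R)
include hB hA hR hMR

theorem dist_coarseRetraction_le (x : X) :
    dist x (coarseRetraction R A x) ≤ C * (R * 2 ^ chainLevel R A x) :=
  hB _ (hMR.trans_le (le_mul_of_one_le_right hR.le (one_le_pow₀ one_le_two))) _ _
    (coarseRetraction_spec hA hR x).2

theorem dist_coarseRetraction_le_of_mem {a : X} (ha : a ∈ A) :
    dist a (coarseRetraction R A a) ≤ C * R := by
  simpa [chainLevel_eq_zero ha] using dist_coarseRetraction_le hB hA hR hMR a

/-- If `y` needs a higher level than `x`, then one scale below its level `y` is not yet
chain connected to the point `coarseRetraction R A x ∈ A`, which lies close to `x`. -/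
theorem scale_chainLevel_le (hC : 0 ≤ C) (hle : chainLevel R A x ≤ chainLevel R A y)
    (h : ¬ChainConnected (R * 2 ^ chainLevel R A x) x y) :
    R * 2 ^ chainLevel R A y ≤ 2 * (1 + C) * dist x y := by
  have hxy : R * 2 ^ chainLevel R A x < dist x y := ChainConnected.lt_dist_of_not h
  rcases hle.eq_or_lt with heq | hlt
  · rw [← heq]
    nlinarith [dist_nonneg (x := x) (y := y)]
  obtain ⟨j, hj⟩ := Nat.exists_eq_succ_of_ne_zero hlt.ne_bot
  set a := coarseRetraction R A x
  have hfar : R * 2 ^ j < dist y a := by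
    refine lt_of_not_ge fun hya => Nat.notMem_of_lt_sInf (hj ▸ j.lt_succ_self) ?_
    exact ⟨a, (coarseRetraction_spec hA hR x).1, .of_dist_le hya⟩
  have hnear : dist y a ≤ dist x y + C * dist x y :=
    calc dist y a ≤ dist y x + dist x a := dist_triangle y x a
      _ ≤ dist x y + C * dist x y := by
        rw [dist_comm y x]
        gcongr
        exact (dist_coarseRetraction_le hB hA hR hMR x).trans (by gcongr)
  rw [hj, pow_succ]
  linarith

theorem dist_coarseRetraction_le_of_chainLevel_le (hC : 0 ≤ C)
    (hle : chainLevel R A x ≤ chainLevel R A y) :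
    dist (coarseRetraction R A x) (coarseRetraction R A y) ≤
      (1 + 3 * C + 2 * C ^ 2) * dist x y := by
  by_cases h : ChainConnected (R * 2 ^ chainLevel R A x) x y
  · rw [coarseRetraction_eq_of_chainConnected hA hR hle h, dist_self]
    positivity
  have hxy : R * 2 ^ chainLevel R A x < dist x y := ChainConnected.lt_dist_of_not h
  have hx := dist_coarseRetraction_le hB hA hR hMR x
  have hy := dist_coarseRetraction_le hB hA hR hMR y
  have hscale := scale_chainLevel_le hB hA hR hMR hC hle h
  calc dist (coarseRetraction R A x) (coarseRetraction R A y)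
      ≤ dist (coarseRetraction R A x) x + dist x y + dist y (coarseRetraction R A y) :=
        dist_triangle4 _ _ _ _
    _ ≤ C * dist x y + dist x y + C * (2 * (1 + C) * dist x y) := by
        rw [dist_comm _ x]
        gcongr
        · exact hx.trans (by gcongr)
        · exact hy.trans (by gcongr)
    _ = (1 + 3 * C + 2 * C ^ 2) * dist x y := by ring

theorem dist_coarseRetraction_le_mul (hC : 0 ≤ C) (x y : X) :
    dist (coarseRetraction R A x) (coarseRetraction R A y) ≤
      (1 + 3 * C + 2 * C ^ 2) * dist x y := by
  rcases le_total (chainLevel R A x) (chainLevel R A y) with hle | hle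
  · exact dist_coarseRetraction_le_of_chainLevel_le hB hA hR hMR hC hle
  · rw [dist_comm, dist_comm x]
    exact dist_coarseRetraction_le_of_chainLevel_le hB hA hR hMR hC hle

end CoarseRetraction

section Extensors

variable {X Y : Type*} [MetricSpace X] [MetricSpace Y] {δ : ℝ}

theorem eq_of_dist_le_of_separated (hY : ∀ u v : Y, u ≠ v → δ < dist u v) {u v : Y}
    (h : dist u v ≤ δ) : u = v :=
  by_contra fun hne => (hY u v hne).not_ge h

theorem ChainConnected.apply_eq_apply (hY : ∀ u v : Y, u ≠ v → δ < dist u v) {g : X → Y}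
    {L r : ℝ} (hg : ∀ u v, dist (g u) (g v) ≤ L * dist u v) (hL : 0 ≤ L) (hLr : L * r ≤ δ)
    {x y : X} (h : ChainConnected r x y) : g x = g y := by
  refine h.mem_of_mem (V := {z | g x = g z}) (fun u hu v huv => ?_) rfl
  have hstep : dist (g u) (g v) ≤ δ :=
    (hg u v).trans ((mul_le_mul_of_nonneg_left huv hL).trans hLr)
  exact hu.trans (eq_of_dist_le_of_separated hY hstep)

theorem largeScaleLipschitzExtensorOf_of_higsonAsdimLE_zero (hX : HigsonAsdimLE X 0)
    (hY : ∃ δ, 0 < δ ∧ ∀ u v : Y, u ≠ v → δ < dist u v) : LargeScaleLipschitzExtensorOf X Y := by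
  obtain ⟨C, hC, M, hM, hB⟩ := higsonAsdimLE_zero_iff_boundedChainComponents.mp hX
  obtain ⟨δ, hδ, hY⟩ := hY
  refine ⟨1 + 3 * C + 2 * C ^ 2, by positivity, δ / (C * M), by positivity, ?_⟩
  intro A hA lam hlam hlamM f hf
  set R := δ / (C * lam)
  have hR : 0 < R := by positivity
  have hMR : M < R := by
    rw [lt_div_iff₀ (by positivity)] at hlamM ⊢
    linarith
  have hCR : lam * (C * R) = δ := by simp only [R]; field_simp
  have hρA x : coarseRetraction R A x ∈ A := (coarseRetraction_spec hA hR x).1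
  refine ⟨fun x => f ⟨_, hρA x⟩, fun a => ?_, fun x y => ?_⟩
  · refine eq_of_dist_le_of_separated hY ((hf _ a).trans ?_)
    rw [dist_comm, ← hCR]
    gcongr
    exact dist_coarseRetraction_le_of_mem hB hA hR hMR a.2
  · calc dist (f ⟨_, hρA x⟩) (f ⟨_, hρA y⟩)
        ≤ lam * dist (coarseRetraction R A x) (coarseRetraction R A y) := hf _ _
      _ ≤ lam * ((1 + 3 * C + 2 * C ^ 2) * dist x y) := by
        gcongr
        exact dist_coarseRetraction_le_mul hB hA hR hMR hC.le x y
      _ = (1 + 3 * C + 2 * C ^ 2) * lam * dist x y := by ring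

theorem dist_ite_pair_le [DecidableEq X] {x y : X} {p q : Y} {L : ℝ}
    (h : dist p q ≤ L * dist x y) (a b : ({x, y} : Set X)) :
    dist (if (a : X) = x then p else q) (if (b : X) = x then p else q) ≤ L * dist (a : X) b := by
  obtain ⟨a, rfl | rfl⟩ := a <;> obtain ⟨b, rfl | rfl⟩ := b <;> split_ifs <;> simp_all [dist_comm]

theorem higsonAsdimLE_zero_of_largeScaleLipschitzExtensorOf [Nontrivial Y]
    (hY : ∃ δ, 0 < δ ∧ ∀ u v : Y, u ≠ v → δ < dist u v) (h : LargeScaleLipschitzExtensorOf X Y) :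
    HigsonAsdimLE X 0 := by
  classical
  obtain ⟨δ, hδ, hY⟩ := hY
  obtain ⟨p, q, hpq⟩ := exists_pair_ne Y
  obtain ⟨C, hC, M, hM, hext⟩ := h
  have hpq' : 0 < dist p q := dist_pos.mpr hpq
  refine higsonAsdimLE_zero_iff_boundedChainComponents.mpr
    ⟨C * dist p q / δ, by positivity, δ / (C * M), by positivity, fun r hr x y hxy => ?_⟩
  have hr0 : 0 < r := (by positivity : 0 < δ / (C * M)).trans hr
  set lam := δ / (C * r)
  have hlam : 0 < lam := by positivity
  have hlamM : lam < M := by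
    rw [div_lt_iff₀ (by positivity)] at hr ⊢
    linarith
  by_contra! hfar
  have hne : x ≠ y := dist_pos.mp ((by positivity : 0 < C * dist p q / δ * r).trans hfar)
  have hpair : dist p q ≤ lam * dist x y := by
    rw [div_mul_eq_mul_div, le_div_iff₀ (by positivity)]
    rw [div_mul_eq_mul_div, div_lt_iff₀ hδ] at hfar
    linarith
  obtain ⟨g, hgA, hg⟩ :=
    hext {x, y} (Set.insert_nonempty x {y}) lam hlam hlamM _ (dist_ite_pair_le hpair)
  have hCr : C * lam * r = δ := by simp only [lam]; field_simp
  have hgxy : g x = g y := hxy.apply_eq_apply hY hg (by positivity) hCr.le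
  have hgx := hgA ⟨x, by simp⟩
  have hgy := hgA ⟨y, by simp⟩
  simp only [if_pos, hne.symm, if_false] at hgx hgy
  exact hpq (hgx ▸ hgy ▸ hgxy)

end Extensors

theorem higson_asdim_zero_iff_large_scale_extensors
    {X : Type*} [MetricSpace X] :
    (HigsonAsdimLE X 0 ↔
      ∀ (Y : Type*) [MetricSpace Y], Nonempty Y →
        (∃ δ : ℝ, 0 < δ ∧ ∀ x y : Y, x ≠ y → δ < dist x y) →
        LargeScaleLipschitzExtensorOf X Y) ∧
    (HigsonAsdimLE X 0 ↔
      LargeScaleLipschitzExtensorOf X ({-1, 1} : Set ℝ)) := by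
  have hS : ∃ δ : ℝ, 0 < δ ∧ ∀ u v : ({-1, 1} : Set ℝ), u ≠ v → δ < dist u v := by
    refine ⟨1, one_pos, ?_⟩
    rintro ⟨u, rfl | rfl⟩ ⟨v, rfl | rfl⟩ h <;> simp_all [Subtype.dist_eq, Real.dist_eq] <;> norm_num
  have hSU : ∃ δ : ℝ, 0 < δ ∧ ∀ u v : ULift ({-1, 1} : Set ℝ), u ≠ v → δ < dist u v :=
    let ⟨δ, hδ, h⟩ := hS
    ⟨δ, hδ, fun u v huv => h _ _ (ULift.down_injective.ne huv)⟩
  have : Nontrivial ({-1, 1} : Set ℝ) := (Set.nontrivial_pair (by norm_num)).coe_sort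
  refine ⟨⟨fun hX Y _ _ hY => largeScaleLipschitzExtensorOf_of_higsonAsdimLE_zero hX hY,
    fun h => higsonAsdimLE_zero_of_largeScaleLipschitzExtensorOf hSU (h _ inferInstance hSU)⟩,
    ⟨fun hX => largeScaleLipschitzExtensorOf_of_higsonAsdimLE_zero hX hS,
    higsonAsdimLE_zero_of_largeScaleLipschitzExtensorOf hS⟩⟩
end

section
/- Let (X,d) be a metric space and suppose X = A ∪ B for subsets A, B ⊆ X (each with the induced metric). Then for every integer n ≥ 0, the macroscopic Nagata-Assouad dimension of X is at most n if and only if the macroscopic Nagata-Assouad dimensions of A and of B are both at most n; consequently the macroscopic Nagata-Assouad dimension of X equals the maximum of those of A and B. -/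
/-!
The union theorem holds for any pseudometric `d`. Take an `(n+1)`-coloured cover `U` of `A` at
scale `r` and one, `V`, of `B` at the much larger scale `(2 C_A + 3) r`. In each colour, every
member of `V` absorbs the members of `U` that come `r`-close to it, and the members of `U` close
to no member of `V` are kept. Because the members of `V` are far apart, no member of `U` is close
to two of them, so the new families are still `r`-disjoint, and their diameters stay linear in
`r`. The truncated distance `max(d, 1)` is a pseudometric whose restriction to a subset is the
subset's own truncated distance, so the theorem follows; the converse is restriction of covers.
-/

open scoped Classical

/-- Nagata-Assouad dimension at most `n` for the distance function `d` on `X`: there is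
`C > 0` such that for every `r > 0` there is a cover of `X` splitting into `n+1` families,
each `r`-disjoint with respect to `d`, with all members of `d`-diameter at most `C·r`. -/
def NagataDimWithLE {X : Type*} (d : X → X → ℝ) (n : ℕ) : Prop :=
  ∃ C : ℝ, 0 < C ∧ ∀ r : ℝ, 0 < r →
    ∃ U : Fin (n + 1) → Set (Set X),
      (∀ x : X, ∃ i, ∃ V ∈ U i, x ∈ V) ∧
      (∀ i, ∀ V ∈ U i, ∀ W ∈ U i, V ≠ W → ∀ x ∈ V, ∀ y ∈ W, r < d x y) ∧
      (∀ i, ∀ V ∈ U i, ∀ x ∈ V, ∀ y ∈ V, d x y ≤ C * r)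

/-- The macroscopic Nagata-Assouad dimension of a metric space `X` is at most `n`, i.e. the
Nagata-Assouad dimension of `(X, max(d,1))` is at most `n`. -/
def MacroscopicNagataDimLE (X : Type*) [MetricSpace X] (n : ℕ) : Prop :=
  NagataDimWithLE (fun x y : X => if x = y then 0 else max (dist x y) 1) n

open Set

section NagataDim

variable {X ι : Type*}

structure IsPseudoDist (d : X → X → ℝ) : Prop where
  self : ∀ x, d x x = 0
  comm : ∀ x y, d x y = d y x
  triangle : ∀ x y z, d x z ≤ d x y + d y z

structure IsColoredCover (d : X → X → ℝ) (s : Set X) (r D : ℝ) (U : ι → Set (Set X)) :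
    Prop where
  cover : ∀ x ∈ s, ∃ i, ∃ V ∈ U i, x ∈ V
  disjoint : ∀ i, ∀ V ∈ U i, ∀ W ∈ U i, V ≠ W → ∀ x ∈ V, ∀ y ∈ W, r < d x y
  diam_le : ∀ i, ∀ V ∈ U i, ∀ x ∈ V, ∀ y ∈ V, d x y ≤ D

def NagataDimOnLE (d : X → X → ℝ) (s : Set X) (n : ℕ) : Prop :=
  ∃ C : ℝ, 0 < C ∧ ∀ r : ℝ, 0 < r →
    ∃ U : Fin (n + 1) → Set (Set X), IsColoredCover d s r (C * r) U

variable {d : X → X → ℝ} {r D : ℝ}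

lemma IsColoredCover.mono {s t : Set X} {U : ι → Set (Set X)} (hst : s ⊆ t)
    (hU : IsColoredCover d t r D U) : IsColoredCover d s r D U :=
  ⟨fun x hx => hU.cover x (hst hx), hU.disjoint, hU.diam_le⟩

lemma IsColoredCover.mono_diam {s : Set X} {U : ι → Set (Set X)} {D' : ℝ} (hD : D ≤ D')
    (hU : IsColoredCover d s r D U) : IsColoredCover d s r D' U :=
  ⟨hU.cover, hU.disjoint, fun i V hV x hx y hy => (hU.diam_le i V hV x hx y hy).trans hD⟩

lemma IsColoredCover.image_val {s : Set X} {U : ι → Set (Set s)}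
    (hU : IsColoredCover (fun a b : s => d a b) univ r D U) :
    IsColoredCover d s r D (fun i => image Subtype.val '' U i) where
  cover x hx := by
    obtain ⟨i, V, hV, hxV⟩ := hU.cover ⟨x, hx⟩ trivial
    exact ⟨i, _, mem_image_of_mem _ hV, mem_image_of_mem _ hxV⟩
  disjoint := by
    rintro i _ ⟨V, hV, rfl⟩ _ ⟨W, hW, rfl⟩ hne _ ⟨a, ha, rfl⟩ _ ⟨b, hb, rfl⟩
    exact hU.disjoint i V hV W hW (fun h => hne (h ▸ rfl)) a ha b hb
  diam_le := by
    rintro i _ ⟨V, hV, rfl⟩ _ ⟨a, ha, rfl⟩ _ ⟨b, hb, rfl⟩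
    exact hU.diam_le i V hV a ha b hb

lemma IsColoredCover.preimage_val {s : Set X} {U : ι → Set (Set X)}
    (hU : IsColoredCover d s r D U) :
    IsColoredCover (fun a b : s => d a b) univ r D (fun i => preimage Subtype.val '' U i) where
  cover a _ := by
    obtain ⟨i, V, hV, haV⟩ := hU.cover a a.2
    exact ⟨i, _, mem_image_of_mem _ hV, haV⟩
  disjoint := by
    rintro i _ ⟨V, hV, rfl⟩ _ ⟨W, hW, rfl⟩ hne a ha b hb
    exact hU.disjoint i V hV W hW (fun h => hne (h ▸ rfl)) a ha b hb
  diam_le := by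
    rintro i _ ⟨V, hV, rfl⟩ a ha b hb
    exact hU.diam_le i V hV a ha b hb

lemma nagataDimWithLE_iff_univ {n : ℕ} : NagataDimWithLE d n ↔ NagataDimOnLE d univ n := by
  refine exists_congr fun C => and_congr_right fun _ => forall₂_congr fun r _ =>
    exists_congr fun U => ⟨fun ⟨hcov, hdisj, hdiam⟩ => ⟨fun x _ => hcov x, hdisj, hdiam⟩,
      fun hU => ⟨fun x => hU.cover x trivial, hU.disjoint, hU.diam_le⟩⟩

lemma nagataDimWithLE_subtype_iff {s : Set X} {n : ℕ} :
    NagataDimWithLE (fun a b : s => d a b) n ↔ NagataDimOnLE d s n := by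
  rw [nagataDimWithLE_iff_univ]
  constructor
  · rintro ⟨C, hC, hU⟩
    refine ⟨C, hC, fun r hr => ?_⟩
    obtain ⟨U, hU⟩ := hU r hr
    exact ⟨_, hU.image_val⟩
  · rintro ⟨C, hC, hU⟩
    refine ⟨C, hC, fun r hr => ?_⟩
    obtain ⟨U, hU⟩ := hU r hr
    exact ⟨_, hU.preimage_val⟩

lemma NagataDimOnLE.mono {s t : Set X} {n : ℕ} (hst : s ⊆ t) (h : NagataDimOnLE d t n) :
    NagataDimOnLE d s n := by
  obtain ⟨C, hC, hU⟩ := h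
  exact ⟨C, hC, fun r hr => (hU r hr).imp fun U hU => hU.mono hst⟩

def IsNear (d : X → X → ℝ) (r : ℝ) (S T : Set X) : Prop :=
  ∃ x ∈ S, ∃ y ∈ T, d x y ≤ r

def attach (d : X → X → ℝ) (r : ℝ) (U : Set (Set X)) (T : Set X) : Set X :=
  T ∪ ⋃₀ {S ∈ U | IsNear d r S T}

def attachedCover (d : X → X → ℝ) (r : ℝ) (U V : ι → Set (Set X)) (i : ι) : Set (Set X) :=
  attach d r (U i) '' V i ∪ {S ∈ U i | ∀ T ∈ V i, ¬ IsNear d r S T}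

section Attach

variable {U V : ι → Set (Set X)} {s t : Set X} {r' D' : ℝ}

lemma exists_near_of_mem_attach (hd : IsPseudoDist d) (hU : IsColoredCover d s r D U)
    (hrD : 0 ≤ D + r) {i : ι} {T : Set X} {p : X} (hp : p ∈ attach d r (U i) T) :
    ∃ y ∈ T, d p y ≤ D + r := by
  rcases hp with hpT | ⟨S, ⟨hS, x, hxS, y, hyT, hxy⟩, hpS⟩
  · exact ⟨p, hpT, by rwa [hd.self]⟩
  · exact ⟨y, hyT, (hd.triangle p x y).trans (add_le_add (hU.diam_le i S hS p hpS x hxS) hxy)⟩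

lemma IsColoredCover.attachedCover_cover (hU : IsColoredCover d s r D U)
    (hV : IsColoredCover d t r' D' V) : ∀ x ∈ s ∪ t, ∃ i, ∃ E ∈ attachedCover d r U V i, x ∈ E := by
  rintro x (hx | hx)
  · obtain ⟨i, S, hS, hxS⟩ := hU.cover x hx
    by_cases hnear : ∃ T ∈ V i, IsNear d r S T
    · obtain ⟨T, hT, hST⟩ := hnear
      exact ⟨i, _, Or.inl (mem_image_of_mem _ hT), Or.inr ⟨S, ⟨hS, hST⟩, hxS⟩⟩
    · push Not at hnear
      exact ⟨i, S, Or.inr ⟨hS, hnear⟩, hxS⟩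
  · obtain ⟨i, T, hT, hxT⟩ := hV.cover x hx
    exact ⟨i, _, Or.inl (mem_image_of_mem _ hT), Or.inl hxT⟩

lemma IsColoredCover.attachedCover_diam_le (hd : IsPseudoDist d) (hU : IsColoredCover d s r D U)
    (hV : IsColoredCover d t r' D' V) (hrD : 0 ≤ D + r) :
    ∀ i, ∀ E ∈ attachedCover d r U V i, ∀ p ∈ E, ∀ q ∈ E, d p q ≤ max D (D' + 2 * (D + r)) := by
  rintro i _ (⟨T, hT, rfl⟩ | ⟨hS, -⟩) p hp q hq
  · obtain ⟨y, hy, hpy⟩ := exists_near_of_mem_attach hd hU hrD hp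
    obtain ⟨y', hy', hqy'⟩ := exists_near_of_mem_attach hd hU hrD hq
    have : d p q ≤ d p y + d y y' + d q y' := calc
      d p q ≤ d p y + (d y y' + d y' q) := (hd.triangle p y q).trans <| by
        gcongr; exact hd.triangle y y' q
      _ = d p y + d y y' + d q y' := by rw [hd.comm y' q, add_assoc]
    have hyy' := hV.diam_le i T hT y hy y' hy'
    exact le_max_of_le_right (by linarith)
  · exact le_max_of_le_left (hU.diam_le i _ hS p hp q hq)

lemma IsColoredCover.lt_of_mem_attach_of_isolated (hd : IsPseudoDist d)
    (hU : IsColoredCover d s r D U) {i : ι} {T F : Set X} (hT : T ∈ V i) (hF : F ∈ U i)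
    (hFT : ∀ T ∈ V i, ¬ IsNear d r F T) {p q : X} (hp : p ∈ attach d r (U i) T) (hq : q ∈ F) :
    r < d p q := by
  rcases hp with hpT | ⟨S, ⟨hS, hST⟩, hpS⟩
  · rw [hd.comm]
    exact not_le.mp fun h => hFT T hT ⟨q, hq, p, hpT, h⟩
  · exact hU.disjoint i S hS F hF (by rintro rfl; exact hFT T hT hST) p hpS q hq

lemma IsColoredCover.lt_of_mem_attach_of_mem_attach (hd : IsPseudoDist d)
    (hU : IsColoredCover d s r D U) (hV : IsColoredCover d t r' D' V) (hrD : 0 ≤ D + r)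
    (hr' : 2 * D + 3 * r ≤ r') {i : ι} {T T' : Set X} (hT : T ∈ V i) (hT' : T' ∈ V i)
    (hne : T ≠ T') {p q : X} (hp : p ∈ attach d r (U i) T) (hq : q ∈ attach d r (U i) T') :
    r < d p q := by
  obtain ⟨y, hy, hpy⟩ := exists_near_of_mem_attach hd hU hrD hp
  obtain ⟨y', hy', hqy'⟩ := exists_near_of_mem_attach hd hU hrD hq
  have : r' < d p y + d p q + d q y' := calc
    r' < d y y' := hV.disjoint i T hT T' hT' hne y hy y' hy'
    _ ≤ d y p + (d p q + d q y') := (hd.triangle y p y').trans <| by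
      gcongr; exact hd.triangle p q y'
    _ = d p y + d p q + d q y' := by rw [hd.comm y p, add_assoc]
  linarith

lemma IsColoredCover.attachedCover_disjoint (hd : IsPseudoDist d)
    (hU : IsColoredCover d s r D U) (hV : IsColoredCover d t r' D' V) (hrD : 0 ≤ D + r)
    (hr' : 2 * D + 3 * r ≤ r') :
    ∀ i, ∀ E ∈ attachedCover d r U V i, ∀ F ∈ attachedCover d r U V i, E ≠ F →
      ∀ p ∈ E, ∀ q ∈ F, r < d p q := by
  rintro i _ (⟨T, hT, rfl⟩ | ⟨hE, hET⟩) _ (⟨T', hT', rfl⟩ | ⟨hF, hFT⟩) hne p hp q hq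
  · exact hU.lt_of_mem_attach_of_mem_attach hd hV hrD hr' hT hT'
      (by rintro rfl; exact hne rfl) hp hq
  · exact hU.lt_of_mem_attach_of_isolated hd hT hF hFT hp hq
  · rw [hd.comm]
    exact hU.lt_of_mem_attach_of_isolated hd hT' hE hET hq hp
  · exact hU.disjoint i _ hE _ hF hne p hp q hq

lemma IsColoredCover.attachedCover (hd : IsPseudoDist d)
    (hU : IsColoredCover d s r D U) (hV : IsColoredCover d t r' D' V) (hrD : 0 ≤ D + r)
    (hr' : 2 * D + 3 * r ≤ r') :
    IsColoredCover d (s ∪ t) r (max D (D' + 2 * (D + r))) (attachedCover d r U V) :=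
  ⟨hU.attachedCover_cover hV, hU.attachedCover_disjoint hd hV hrD hr',
    hU.attachedCover_diam_le hd hV hrD⟩

end Attach

lemma NagataDimOnLE.union (hd : IsPseudoDist d) {s t : Set X} {n : ℕ}
    (hs : NagataDimOnLE d s n) (ht : NagataDimOnLE d t n) : NagataDimOnLE d (s ∪ t) n := by
  obtain ⟨CA, hCA, hU⟩ := hs
  obtain ⟨CB, hCB, hV⟩ := ht
  refine ⟨CA + CB * (2 * CA + 3) + 2 * CA + 2, by positivity, fun r hr => ?_⟩
  obtain ⟨U, hU⟩ := hU r hr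
  obtain ⟨V, hV⟩ := hV ((2 * CA + 3) * r) (by positivity)
  refine ⟨_, (hU.attachedCover hd hV (by positivity) (by linarith)).mono_diam ?_⟩
  have hCAr : 0 ≤ CA * r := by positivity
  have hCBr : 0 ≤ CB * ((2 * CA + 3) * r) := by positivity
  exact max_le (by nlinarith) (by nlinarith)

end NagataDim

section Macroscopic

variable {X : Type*} [PseudoMetricSpace X]

noncomputable def macroscopicDist (X : Type*) [PseudoMetricSpace X] (x y : X) : ℝ :=
  if x = y then 0 else max (dist x y) 1

@[simp]
lemma macroscopicDist_self (x : X) : macroscopicDist X x x = 0 := if_pos rfl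

lemma macroscopicDist_nonneg {x y : X} : 0 ≤ macroscopicDist X x y := by
  unfold macroscopicDist
  split_ifs <;> positivity

lemma one_le_macroscopicDist {x y : X} (h : x ≠ y) : 1 ≤ macroscopicDist X x y := by
  simp [macroscopicDist, h]

lemma dist_le_macroscopicDist {x y : X} (h : x ≠ y) : dist x y ≤ macroscopicDist X x y := by
  simp [macroscopicDist, h]

lemma isPseudoDist_macroscopicDist : IsPseudoDist (macroscopicDist X) where
  self := macroscopicDist_self
  comm x y := by simp [macroscopicDist, eq_comm, dist_comm]
  triangle x y z := by
    rcases eq_or_ne x y with rfl | hxy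
    · simp
    rcases eq_or_ne y z with rfl | hyz
    · simp
    rcases eq_or_ne x z with rfl | hxz
    · rw [macroscopicDist_self]
      exact add_nonneg macroscopicDist_nonneg macroscopicDist_nonneg
    have hxz' : macroscopicDist X x z = max (dist x z) 1 := if_neg hxz
    rw [hxz']
    refine max_le ((dist_triangle x y z).trans (add_le_add ?_ ?_)) ?_
    · exact dist_le_macroscopicDist hxy
    · exact dist_le_macroscopicDist hyz
    · linarith [one_le_macroscopicDist hxy, macroscopicDist_nonneg (x := y) (y := z)]

lemma macroscopicDist_subtype (s : Set X) :
    (fun a b : s => macroscopicDist X a b) = macroscopicDist s := by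
  ext a b
  simp [macroscopicDist, Subtype.ext_iff, Subtype.dist_eq]

end Macroscopic

theorem macroscopic_nagata_dim_union
    {X : Type*} [MetricSpace X] (A B : Set X) (hAB : A ∪ B = Set.univ) (n : ℕ) :
    MacroscopicNagataDimLE X n ↔ (MacroscopicNagataDimLE A n ∧ MacroscopicNagataDimLE B n) := by
  have hsub (s : Set X) :
      MacroscopicNagataDimLE s n ↔ NagataDimOnLE (macroscopicDist X) s n := by
    rw [← nagataDimWithLE_subtype_iff, macroscopicDist_subtype]
    rfl
  have huniv : MacroscopicNagataDimLE X n ↔ NagataDimOnLE (macroscopicDist X) univ n :=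
    nagataDimWithLE_iff_univ
  rw [huniv, hsub, hsub, ← hAB]
  exact ⟨fun h => ⟨h.mono subset_union_left, h.mono subset_union_right⟩,
    fun ⟨hA, hB⟩ => hA.union isPseudoDist_macroscopicDist hB⟩
end
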